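/- arXiv:2501.11027 — 7 statements merged into one kernel-verified Lean document; each statement's English description precedes it below -/
import Mathlib

section
/- Let λ ∈ 𝔻 with λ ≠ 0, and let ω, ζ ∈ 𝔻 with ζ ≠ ω be such that B_λ(ζ) = B_λ(ω). Then the degree-two Blaschke product B_{ω,ζ}(z) = ((z−ζ)/(1−conj(ζ)·z))·((z−ω)/(1−conj(ω)·z)) satisfies B_{ω,ζ}(0) = B_{ω,ζ}(λ); explicitly, ζ·ω = ((λ−ζ)/(1−conj(ζ)·λ))·((λ−ω)/(1−conj(ω)·λ)). -/
/-!
Clearing denominators in `B_λ(ζ) = B_λ(ω)` and cancelling the factor `ζ - ω` leaves the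
symmetric relation `ζ + ω = λ + conj λ · ζω`. Together with its complex conjugate this
relation is all that is needed: the identity `ζω (1 - conj ζ · λ)(1 - conj ω · λ) = (λ - ζ)(λ - ω)`
is a linear combination of the two.
-/

open Complex

noncomputable def Blam (lam z : ℂ) : ℂ := z * (z - lam) / (1 - (starRingEnd ℂ) lam * z)

open ComplexConjugate

theorem one_sub_conj_mul_ne_zero {a b : ℂ} (ha : ‖a‖ < 1) (hb : ‖b‖ ≤ 1) :
    1 - conj a * b ≠ 0 := by
  refine sub_ne_zero.mpr fun h ↦ ?_
  have : ‖conj a * b‖ < 1 := by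
    rw [norm_mul, Complex.norm_conj]
    exact mul_lt_one_of_nonneg_of_lt_one_left (norm_nonneg a) ha hb
  simp [← h] at this

theorem add_eq_of_Blam_eq {lam ζ ω : ℂ} (hζ : 1 - conj lam * ζ ≠ 0) (hω : 1 - conj lam * ω ≠ 0)
    (hne : ζ ≠ ω) (heq : Blam lam ζ = Blam lam ω) :
    ζ + ω = lam + conj lam * (ζ * ω) := by
  rw [Blam, Blam, div_eq_div_iff hζ hω] at heq
  refine mul_left_cancel₀ (sub_ne_zero.mpr hne) ?_
  linear_combination heq

/-- `ζ'`, `ω'`, `l'` play the roles of the conjugates of `ζ`, `ω`, `l`. -/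
theorem mul_mul_one_sub_mul_eq_of_add_eq {R : Type*} [CommRing R] {l l' ζ ζ' ω ω' : R}
    (h : ζ + ω = l + l' * (ζ * ω)) (h' : ζ' + ω' = l' + l * (ζ' * ω')) :
    ζ * ω * ((1 - ζ' * l) * (1 - ω' * l)) = (l - ζ) * (l - ω) := by
  linear_combination l * h - l * ζ * ω * h'

theorem stmt1_general (lam : ℂ) (hlam : ‖lam‖ < 1)
    (ω ζ : ℂ) (hω : ‖ω‖ < 1) (hζ : ‖ζ‖ < 1) (hne : ζ ≠ ω)
    (heq : Blam lam ζ = Blam lam ω) :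
    ζ * ω = ((lam - ζ) / (1 - (starRingEnd ℂ) ζ * lam)) *
        ((lam - ω) / (1 - (starRingEnd ℂ) ω * lam)) := by
  have hsum := add_eq_of_Blam_eq (one_sub_conj_mul_ne_zero hlam hζ.le)
    (one_sub_conj_mul_ne_zero hlam hω.le) hne heq
  have hsum_conj : conj ζ + conj ω = conj lam + lam * (conj ζ * conj ω) := by
    simpa using congrArg conj hsum
  rw [div_mul_div_comm, eq_div_iff (mul_ne_zero (one_sub_conj_mul_ne_zero hζ hlam.le)
    (one_sub_conj_mul_ne_zero hω hlam.le))]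
  exact mul_mul_one_sub_mul_eq_of_add_eq hsum hsum_conj

/-- if `ζ ≠ ω` in the disc satisfy `B_λ(ζ) = B_λ(ω)`, then the degree-two Blaschke
product with zeroes `ζ, ω` takes the same value at `0` and at `λ`; explicitly
`ζ·ω = ((λ−ζ)/(1−conj(ζ)λ))·((λ−ω)/(1−conj(ω)λ))`. -/
theorem stmt1 (lam : ℂ) (hlam : ‖lam‖ < 1) (hlam0 : lam ≠ 0)
    (ω ζ : ℂ) (hω : ‖ω‖ < 1) (hζ : ‖ζ‖ < 1) (hne : ζ ≠ ω)
    (heq : Blam lam ζ = Blam lam ω) :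
    ζ * ω = ((lam - ζ) / (1 - (starRingEnd ℂ) ζ * lam)) *
        ((lam - ω) / (1 - (starRingEnd ℂ) ω * lam)) :=
  stmt1_general lam hlam ω ζ hω hζ hne heq
end

section
/- Let λ ∈ ℝ with 0 < |λ| < 1, let z₁, z₂ ∈ (ℝ ∩ 𝔻) \ {0, λ}, and let ω ∈ 𝔻 (a complex number) satisfy B_{z₁,z₂,ω}(0) = B_{z₁,z₂,ω}(λ). Then ω is real. -/
/-!
For real `a` and `x` the Blaschke factor `(x - a) / (1 - a x)` is real, so the node constraint
reads `c ω (1 - ω̄ λ) = p (ω - λ)` with `c = z₁ z₂ ≠ 0` and `p ∈ ℝ`. Since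
`ω (1 - ω̄ λ) = ω - λ |ω|²`, comparing imaginary parts gives `(c - p) Im ω = 0`; if `Im ω ≠ 0`
then `c = p`, and the real parts give `λ |ω|² = λ`, impossible for `ω ∈ 𝔻`.
-/

open Complex

/-- The degree-three Blaschke product with zeroes `a, b, c`. -/
noncomputable def B3 (a b c z : ℂ) : ℂ :=
  ((z - a) / (1 - (starRingEnd ℂ) a * z)) * ((z - b) / (1 - (starRingEnd ℂ) b * z)) *
    ((z - c) / (1 - (starRingEnd ℂ) c * z))

lemma B3_zero (a b c : ℂ) : B3 a b c 0 = -(a * b * c) := by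
  simp only [B3]
  ring

lemma B3_ofReal_ofReal (a b x : ℝ) (ω : ℂ) :
    B3 a b ω x = ((x - a) / (1 - a * x) * ((x - b) / (1 - b * x)) : ℝ) *
      ((x - ω) / (1 - starRingEnd ℂ ω * x)) := by
  simp only [B3, conj_ofReal]
  push_cast
  ring

lemma Complex.one_sub_conj_mul_ne_zero {w z : ℂ} (hw : ‖w‖ < 1) (hz : ‖z‖ < 1) :
    1 - starRingEnd ℂ w * z ≠ 0 := by
  intro h
  have hnorm : ‖starRingEnd ℂ w * z‖ = 1 := by rw [← sub_eq_zero.mp h, norm_one]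
  rw [norm_mul, norm_conj] at hnorm
  nlinarith [norm_nonneg w, norm_nonneg z]

lemma Complex.im_eq_zero_of_mul_one_sub_conj_mul_eq {c p x : ℝ} {ω : ℂ} (hc : c ≠ 0)
    (hx : x ≠ 0) (hω : ‖ω‖ < 1) (h : c * ω * (1 - starRingEnd ℂ ω * x) = p * (ω - x)) :
    ω.im = 0 := by
  have hlin : c * (ω - x * normSq ω) = p * (ω - x) := by
    rw [← h, ← mul_conj]
    ring
  have him : c * ω.im = p * ω.im := by
    simpa using congrArg Complex.im hlin
  have hre : c * (ω.re - x * normSq ω) = p * (ω.re - x) := by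
    simpa using congrArg Complex.re hlin
  by_contra hne
  have hcp : c = p := mul_right_cancel₀ hne him
  subst hcp
  have hnormSq : normSq ω = 1 := by
    have : c * x * (normSq ω - 1) = 0 := by linear_combination -hre
    simpa [hc, hx, sub_eq_zero] using this
  have : normSq ω < 1 := by
    rw [normSq_eq_norm_sq]
    nlinarith [norm_nonneg ω]
  linarith

theorem stmt5_general (lam : ℝ) (hlam0 : 0 < |lam|) (hlam1 : |lam| < 1)
    (z₁ z₂ : ℝ)
    (h₁0 : z₁ ≠ 0) (h₂0 : z₂ ≠ 0)
    (ω : ℂ) (hω : ‖ω‖ < 1)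
    (hnode : B3 (z₁ : ℂ) (z₂ : ℂ) ω 0 = B3 (z₁ : ℂ) (z₂ : ℂ) ω (lam : ℂ)) :
    ω.im = 0 := by
  set p : ℝ := (lam - z₁) / (1 - z₁ * lam) * ((lam - z₂) / (1 - z₂ * lam))
  have hden : 1 - starRingEnd ℂ ω * lam ≠ 0 :=
    one_sub_conj_mul_ne_zero hω (by rwa [norm_real, Real.norm_eq_abs])
  rw [B3_zero, B3_ofReal_ofReal] at hnode
  refine im_eq_zero_of_mul_one_sub_conj_mul_eq (c := z₁ * z₂) (p := p) (x := lam)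
    (mul_ne_zero h₁0 h₂0) (abs_pos.mp hlam0) hω ?_
  rw [mul_div_assoc', eq_div_iff hden] at hnode
  push_cast
  linear_combination -hnode

/-- for real `λ` and real interpolation nodes `z₁, z₂`, any `ω ∈ 𝔻` such that
`B_{z₁,z₂,ω}` satisfies the node constraint `f(0) = f(λ)` is necessarily real. -/
theorem stmt5 (lam : ℝ) (hlam0 : 0 < |lam|) (hlam1 : |lam| < 1)
    (z₁ z₂ : ℝ) (h₁ : |z₁| < 1) (h₂ : |z₂| < 1)
    (h₁0 : z₁ ≠ 0) (h₂0 : z₂ ≠ 0) (h₁l : z₁ ≠ lam) (h₂l : z₂ ≠ lam)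
    (ω : ℂ) (hω : ‖ω‖ < 1)
    (hnode : B3 (z₁ : ℂ) (z₂ : ℂ) ω 0 = B3 (z₁ : ℂ) (z₂ : ℂ) ω (lam : ℂ)) :
    ω.im = 0 :=
  stmt5_general lam hlam0 hlam1 z₁ z₂ h₁0 h₂0 ω hω hnode
end

section
/- Let z₁, …, z_n ∈ 𝔻 be pairwise distinct and let w₁, …, w_n ∈ 𝔻 be pairwise distinct. Then the n × n matrix with (i, j)-entry 1/(1 − z_i·conj(w_j)) is invertible (its determinant is nonzero). -/
/-!
If `c` is in the kernel of the matrix `1 / (1 - x i * y j)`, the polynomial obtained by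
clearing denominators in `∑ j, c j / (1 - X * y j)` has degree `< n` and vanishes at the `n`
distinct points `x i`, so it is zero. Evaluating it at `(y j)⁻¹` isolates `c j`, and at `0`
it isolates the coefficient of the (at most one) index with `y j = 0`; hence `c = 0`.
-/

open Polynomial Finset Function Matrix

section

variable {K ι : Type*} [Field K] [Fintype ι] [DecidableEq ι]

/-- The numerator of `∑ j, c j / (1 - X * y j)` over the common denominator
`∏ k, (1 - X * y k)`. -/
noncomputable def partialFractionNumerator (y c : ι → K) : K[X] :=
  ∑ j, C (c j) * ∏ k ∈ univ.erase j, (1 - X * C (y k))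

variable {y : ι → K} (c : ι → K)

theorem eval_partialFractionNumerator (t : K) :
    (partialFractionNumerator y c).eval t = ∑ j, c j * ∏ k ∈ univ.erase j, (1 - t * y k) := by
  simp only [partialFractionNumerator, eval_finsetSum, eval_mul, eval_C, eval_prod, eval_sub,
    eval_one, eval_X]

theorem natDegree_partialFractionNumerator_lt [Nonempty ι] :
    (partialFractionNumerator y c).natDegree < Fintype.card ι := by
  have hdeg : (partialFractionNumerator y c).natDegree ≤ Fintype.card ι - 1 := by
    refine natDegree_sum_le_of_forall_le _ _ fun j _ => (natDegree_C_mul_le _ _).trans ?_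
    calc _ ≤ ∑ k ∈ univ.erase j, (1 - X * C (y k)).natDegree := natDegree_prod_le _ _
      _ ≤ ∑ _k ∈ univ.erase j, 1 := by gcongr; compute_degree
      _ = Fintype.card ι - 1 := by simp [card_erase_of_mem]
  have := Fintype.card_pos (α := ι)
  omega

theorem eval_partialFractionNumerator_eq_mul_prod {x : K} (hx : ∀ j, x * y j ≠ 1) :
    (partialFractionNumerator y c).eval x =
      (∑ j, 1 / (1 - x * y j) * c j) * ∏ k, (1 - x * y k) := by
  rw [eval_partialFractionNumerator, sum_mul]
  refine sum_congr rfl fun j _ => ?_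
  have hj : 1 - x * y j ≠ 0 := sub_ne_zero.mpr (hx j).symm
  rw [← mul_prod_erase univ (fun k => 1 - x * y k) (mem_univ j)]
  field_simp

theorem eval_inv_partialFractionNumerator {j : ι} (hj : y j ≠ 0) :
    (partialFractionNumerator y c).eval (y j)⁻¹ =
      c j * ∏ k ∈ univ.erase j, (1 - (y j)⁻¹ * y k) := by
  rw [eval_partialFractionNumerator, sum_eq_single j]
  · intro m _ hmj
    rw [prod_eq_zero (mem_erase.mpr ⟨Ne.symm hmj, mem_univ j⟩) (by field_simp; ring), mul_zero]
  · simp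

theorem prod_erase_one_sub_mul_inv_ne_zero (hy : Injective y) {j : ι} (hj : y j ≠ 0) :
    ∏ k ∈ univ.erase j, (1 - (y j)⁻¹ * y k) ≠ 0 := by
  refine prod_ne_zero_iff.mpr fun k hk h => (mem_erase.mp hk).1 (hy ?_)
  field_simp at h
  linear_combination -h

theorem eq_zero_of_partialFractionNumerator_eq_zero (hy : Injective y)
    (hP : partialFractionNumerator y c = 0) : c = 0 := by
  have hc : ∀ j, y j ≠ 0 → c j = 0 := fun j hj => by
    have := eval_inv_partialFractionNumerator c hj
    rw [hP, eval_zero, eq_comm] at this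
    exact (mul_eq_zero.mp this).resolve_right (prod_erase_one_sub_mul_inv_ne_zero hy hj)
  funext j
  by_cases hj : y j = 0
  · have := eval_partialFractionNumerator (y := y) c 0
    rw [hP, eval_zero, sum_eq_single j] at this
    · simpa using this.symm
    · exact fun m _ hmj => by rw [hc m fun h => hmj (hy (h.trans hj.symm)), zero_mul]
    · simp
  · exact hc j hj

end

theorem det_one_div_one_sub_mul_ne_zero {K ι : Type*} [Field K] [Fintype ι] [DecidableEq ι]
    {x y : ι → K} (hx : Injective x) (hy : Injective y) (hxy : ∀ i j, x i * y j ≠ 1) :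
    (of fun i j => 1 / (1 - x i * y j)).det ≠ 0 := by
  intro hdet
  obtain ⟨c, hc0, hc⟩ := exists_mulVec_eq_zero_iff.mpr hdet
  cases isEmpty_or_nonempty ι
  · exact hc0 (Subsingleton.elim _ _)
  have hroot (i : ι) : (partialFractionNumerator y c).eval (x i) = 0 := by
    have hci : ∑ j, 1 / (1 - x i * y j) * c j = 0 := congrFun hc i
    rw [eval_partialFractionNumerator_eq_mul_prod c (hxy i), hci, zero_mul]
  exact hc0 <| eq_zero_of_partialFractionNumerator_eq_zero c hy <|
    eq_zero_of_natDegree_lt_card_of_eval_eq_zero _ hx hroot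
      (natDegree_partialFractionNumerator_lt c)

theorem mul_ne_one_of_norm_lt_one {R : Type*} [SeminormedRing R] [NormOneClass R] {a b : R}
    (ha : ‖a‖ < 1) (hb : ‖b‖ < 1) : a * b ≠ 1 := fun h => by
  have : ‖a * b‖ < 1 :=
    (norm_mul_le a b).trans_lt (mul_lt_one_of_nonneg_of_lt_one_left (norm_nonneg a) ha hb.le)
  rw [h, norm_one] at this
  exact this.false

/-- for pairwise distinct `z₁,…,z_n ∈ 𝔻` and pairwise distinct `w₁,…,w_n ∈ 𝔻`,
the Cauchy-type matrix `[1/(1 − z_i conj(w_j))]` is invertible. -/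
theorem stmt7 (n : ℕ) (z w : Fin n → ℂ)
    (hz : ∀ i, ‖z i‖ < 1) (hw : ∀ i, ‖w i‖ < 1)
    (hzinj : Function.Injective z) (hwinj : Function.Injective w) :
    (Matrix.of fun i j : Fin n => 1 / (1 - z i * (starRingEnd ℂ) (w j))).det ≠ 0 :=
  det_one_div_one_sub_mul_ne_zero hzinj ((starRingEnd ℂ).injective.comp hwinj)
    fun i j => mul_ne_one_of_norm_lt_one (hz i) ((Complex.norm_conj (w j)).trans_lt (hw j))
end

section
/- Let λ ∈ 𝔻 with λ ≠ 0, let z₁, …, z_n ∈ 𝔻 \ {0, λ} be pairwise distinct, let m ≥ 1, and let α, β ∈ M_m(ℂ) be arbitrary. Then the (n·m) × (n·m) block matrix whose (i, j)-block (1 ≤ i, j ≤ n) is the m × m matrix (α + f_λ(z_i)·β)·(α + f_λ(z_j)·β)^* + (B_λ(z_i)·conj(B_λ(z_j))/(1 − z_i·conj(z_j)))·I_m is positive definite. (This is the positive definiteness of the element Ψ of the universal Pythagorean algebra evaluated in any finite-dimensional representation.) -/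
open Complex Matrix
open scoped ComplexOrder Kronecker ComplexConjugate

/-- The function `f_λ(z) = (√(1-|λ|²)/|λ|) (1/(1 - conj(λ) z) - 1)`. -/
noncomputable def flam (lam z : ℂ) : ℂ :=
  ((Real.sqrt (1 - ‖lam‖ ^ 2) / ‖lam‖ : ℝ) : ℂ) *
    (1 / (1 - (starRingEnd ℂ) lam * z) - 1)

/-!
The scalar part of each block is the Szegő kernel `1 / (1 - z_i conj(z_j))` of the disc,
conjugated by the diagonal matrix of the (nonvanishing) values `B_λ(z_i)`. Expanding the kernel
as a geometric series shows that its quadratic form is `∑ₖ |∑ᵢ xᵢ conj(zᵢ)ᵏ|²`, which is positive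
for `x ≠ 0` because the Vandermonde matrix of the distinct points `zᵢ` is invertible. Tensoring
with `I_m` keeps it positive definite, and the first summand is a Gram matrix `A Aᴴ`.
-/

theorem exists_sum_mul_pow_ne_zero {K : Type*} [Field K] {n : ℕ} {z : Fin n → K}
    (hz : Function.Injective z) {y : Fin n → K} (hy : y ≠ 0) :
    ∃ k : ℕ, ∑ i, y i * z i ^ k ≠ 0 := by
  by_contra! h
  have hV : IsUnit (vandermonde z)ᵀ := by
    rw [isUnit_iff_isUnit_det, det_transpose, isUnit_iff_ne_zero, det_vandermonde_ne_zero_iff]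
    exact hz
  refine hy (mulVec_injective_iff_isUnit.mpr hV ?_)
  ext k
  simpa [mulVec, dotProduct, mul_comm] using h k

noncomputable def szegoKernel {ι : Type*} (z : ι → ℂ) : Matrix ι ι ℂ :=
  of fun i j => (1 - z i * conj (z j))⁻¹

@[simp]
theorem szegoKernel_apply {ι : Type*} (z : ι → ℂ) (i j : ι) :
    szegoKernel z i j = (1 - z i * conj (z j))⁻¹ :=
  rfl

theorem hasSum_star_dotProduct_szegoKernel_mulVec {ι : Type*} [Fintype ι] {z : ι → ℂ}
    (hz : ∀ i, ‖z i‖ < 1) (x : ι → ℂ) :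
    HasSum (fun k : ℕ => conj (∑ i, x i * conj (z i) ^ k) * ∑ i, x i * conj (z i) ^ k)
      (star x ⬝ᵥ szegoKernel z *ᵥ x) := by
  have hterm : ∀ i j, HasSum (fun k : ℕ => conj (x i) * z i ^ k * (x j * conj (z j) ^ k))
      (conj (x i) * (szegoKernel z i j * x j)) := by
    intro i j
    have hnorm : ‖z i * conj (z j)‖ < 1 := by
      rw [norm_mul, norm_conj]
      exact mul_lt_one_of_nonneg_of_lt_one_left (norm_nonneg _) (hz i) (hz j).le
    rw [szegoKernel_apply, ← mul_assoc]
    exact ((hasSum_geometric_of_norm_lt_one hnorm).mul_left (conj (x i))).mul_right (x j)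
      |>.congr_fun fun k => by ring
  convert hasSum_sum (s := .univ) fun i _ => hasSum_sum (s := .univ) fun j _ => hterm i j
    using 1
  · ext k
    simp only [map_sum, map_mul, map_pow, conj_conj, Finset.sum_mul_sum]
  · simp only [dotProduct, mulVec, Pi.star_apply, Finset.mul_sum, Complex.star_def]

theorem posDef_szegoKernel {n : ℕ} {z : Fin n → ℂ} (hz : ∀ i, ‖z i‖ < 1)
    (hinj : Function.Injective z) : (szegoKernel z).PosDef := by
  refine .of_dotProduct_mulVec_pos ?_ fun x hx => ?_
  · ext i j
    simp [mul_comm]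
  · obtain ⟨k, hk⟩ := exists_sum_mul_pow_ne_zero ((RingHom.injective _).comp hinj) hx
    refine hasSum_lt (i := k) (fun k => ?_) ?_ hasSum_zero
      (hasSum_star_dotProduct_szegoKernel_mulVec hz x)
    · exact star_mul_self_nonneg _
    · exact star_mul_self_pos (.of_ne_zero hk)

theorem Matrix.PosDef.diagonal_mul_mul_star_diagonal {ι R : Type*} [Fintype ι] [DecidableEq ι]
    [Field R] [PartialOrder R] [StarRing R] {K : Matrix ι ι R} (hK : K.PosDef) {b : ι → R}
    (hb : ∀ i, b i ≠ 0) : (diagonal b * K * star (diagonal b)).PosDef :=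
  (IsUnit.posDef_star_right_conjugate_iff <|
    isUnit_diagonal.mpr <| Pi.isUnit_iff.mpr fun i => (hb i).isUnit).mpr hK

theorem Blam_ne_zero {lam z : ℂ} (hlam : ‖lam‖ < 1) (hz : ‖z‖ < 1) (hz0 : z ≠ 0)
    (hzl : z ≠ lam) : Blam lam z ≠ 0 := by
  refine div_ne_zero (mul_ne_zero hz0 (sub_ne_zero.mpr hzl)) (sub_ne_zero.mpr fun h => ?_)
  have := congrArg norm h
  rw [norm_one, norm_mul, norm_conj] at this
  nlinarith [norm_nonneg lam, norm_nonneg z]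

theorem stmt10_general (lam : ℂ) (hlam : ‖lam‖ < 1)
    (n : ℕ) (z : Fin n → ℂ)
    (hz : ∀ i, ‖z i‖ < 1)
    (hz0 : ∀ i, z i ≠ 0) (hzl : ∀ i, z i ≠ lam)
    (hzinj : Function.Injective z)
    (m : ℕ) (α β : Matrix (Fin m) (Fin m) ℂ) :
    (Matrix.of fun p q : Fin n × Fin m =>
      ((α + flam lam (z p.1) • β) * (α + flam lam (z q.1) • β)ᴴ +
        (Blam lam (z p.1) * (starRingEnd ℂ) (Blam lam (z q.1)) /
          (1 - z p.1 * (starRingEnd ℂ) (z q.1))) • (1 : Matrix (Fin m) (Fin m) ℂ))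
        p.2 q.2).PosDef := by
  set A : Matrix (Fin n × Fin m) (Fin m) ℂ := of fun p t => (α + flam lam (z p.1) • β) p.2 t
  set B : Matrix (Fin n) (Fin n) ℂ := diagonal fun i => Blam lam (z i)
  have hK : (B * szegoKernel z * star B).PosDef :=
    (posDef_szegoKernel hz hzinj).diagonal_mul_mul_star_diagonal
      fun i => Blam_ne_zero hlam (hz i) (hz0 i) (hzl i)
  convert PosDef.posSemidef_add (posSemidef_self_mul_conjTranspose A) (hK.kronecker .one) using 1
  ext p q
  simp only [A, B, of_apply, Matrix.add_apply, Matrix.smul_apply, kroneckerMap_apply,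
    diagonal_mul, mul_diagonal, star_eq_conjTranspose, diagonal_conjTranspose, szegoKernel_apply,
    Pi.star_apply, smul_eq_mul, Complex.star_def, div_eq_mul_inv]
  congr 1
  ring

/-- positive definiteness of the element `Ψ` in every finite-dimensional
representation: the `nm × nm` block matrix with `(i,j)` block
`(α + f_λ(z_i) β)(α + f_λ(z_j) β)* + (B_λ(z_i) conj(B_λ(z_j))/(1 − z_i conj(z_j))) I_m`
is positive definite, for arbitrary `α, β ∈ M_m(ℂ)`. -/
theorem stmt10 (lam : ℂ) (hlam : ‖lam‖ < 1) (hlam0 : lam ≠ 0)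
    (n : ℕ) (z : Fin n → ℂ)
    (hz : ∀ i, ‖z i‖ < 1)
    (hz0 : ∀ i, z i ≠ 0) (hzl : ∀ i, z i ≠ lam)
    (hzinj : Function.Injective z)
    (m : ℕ) (hm : 1 ≤ m) (α β : Matrix (Fin m) (Fin m) ℂ) :
    (Matrix.of fun p q : Fin n × Fin m =>
      ((α + flam lam (z p.1) • β) * (α + flam lam (z q.1) • β)ᴴ +
        (Blam lam (z p.1) * (starRingEnd ℂ) (Blam lam (z q.1)) /
          (1 - z p.1 * (starRingEnd ℂ) (z q.1))) • (1 : Matrix (Fin m) (Fin m) ℂ))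
        p.2 q.2).PosDef :=
  stmt10_general lam hlam n z hz hz0 hzl hzinj m α β
end

section
/- Let n ≥ 1 and let G ∈ M_n(ℂ) be a positive definite matrix such that every entry of its first row is nonzero (G_{1j} ≠ 0 for all j). Let G^{1/2} denote the (unique) positive definite square root of G, and for 1 ≤ i ≤ n set A_i = (G^{1/2})⁻¹ · E_{ii} · G^{1/2}, where E_{ii} is the matrix unit with a single 1 in position (i, i). Then the smallest unital star-subalgebra of M_n(ℂ) containing A₁, …, A_n is all of M_n(ℂ). -/
open Matrix
open scoped ComplexOrder

/-!
Let `S = G^{1/2}`, so `S` is self-adjoint, `S * S = G` and `A i = S⁻¹ E_ii S`. Then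
`A i * (A j)ᴴ = G i j • S⁻¹ E_ij S⁻¹`; since `G 0 j ≠ 0` and `G i 0 = conj (G 0 i) ≠ 0`, the algebra
contains every `S⁻¹ E_0j S⁻¹` and `S⁻¹ E_i0 S⁻¹`. Their product is
`G⁻¹ 0 0 • S⁻¹ E_ij S⁻¹` with `G⁻¹ 0 0 > 0`, so the algebra contains all `S⁻¹ E_ij S⁻¹`, and these
span `M_n(ℂ)` because `X ↦ S⁻¹ X S⁻¹` is bijective.
-/

theorem SMulMemClass.mem_of_smul_mem {S K M : Type*} [GroupWithZero K] [MulAction K M]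
    [SetLike S M] [SMulMemClass S K M] {s : S} {c : K} (hc : c ≠ 0) {x : M} (h : c • x ∈ s) :
    x ∈ s :=
  inv_smul_smul₀ hc x ▸ SMulMemClass.smul_mem c⁻¹ h

namespace Matrix

variable {n R : Type*} [Fintype n] [DecidableEq n]

lemma mul_single_one_mul_mul_single_one_mul [CommSemiring R] (P M Q : Matrix n n R)
    (i k l j : n) :
    P * single i k 1 * M * single l j 1 * Q = M k l • (P * single i j 1 * Q) := by
  have hassoc : P * single i k 1 * M * single l j 1 * Q =
      P * (single i k 1 * M * single l j 1) * Q := by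
    simp only [mul_assoc]
  rw [hassoc, single_mul_mul_single, one_mul, mul_one, ← smul_mul_assoc, ← mul_smul_comm,
    smul_single, smul_eq_mul, mul_one]

lemma span_mul_single_one_mul_eq_top [CommRing R] {P Q : Matrix n n R} (hP : IsUnit P)
    (hQ : IsUnit Q) :
    Submodule.span R (Set.range fun ij : n × n ↦ P * single ij.1 ij.2 1 * Q) = ⊤ := by
  set L : Matrix n n R →ₗ[R] Matrix n n R := LinearMap.mulLeft R P ∘ₗ LinearMap.mulRight R Q
  have hL : Function.Surjective L := fun X ↦ ⟨P⁻¹ * X * Q⁻¹, by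
    simp [L, ← mul_assoc, mul_nonsing_inv _ ((isUnit_iff_isUnit_det P).mp hP),
      mul_assoc _ _ Q, nonsing_inv_mul _ ((isUnit_iff_isUnit_det Q).mp hQ)]⟩
  have hrange : (Set.range fun ij : n × n ↦ P * single ij.1 ij.2 1 * Q) =
      L '' Set.range (stdBasis R n n) := by
    rw [← Set.range_comp]
    congr 1
    ext ⟨i, j⟩ : 1
    simp [L, stdBasis_eq_single, mul_assoc]
  rw [hrange, Submodule.span_image, (stdBasis R n n).span_eq, Submodule.map_top,
    LinearMap.range_eq_top.mpr hL]

lemma inv_mul_single_mul_mul_star [CommRing R] [StarRing R] {S : Matrix n n R}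
    (hS : IsSelfAdjoint S) (i j : n) :
    S⁻¹ * single i i 1 * S * star (S⁻¹ * single j j 1 * S) =
      (S * S) i j • (S⁻¹ * single i j 1 * S⁻¹) := by
  have hSinv : star S⁻¹ = S⁻¹ := by
    rw [star_eq_conjTranspose, conjTranspose_nonsing_inv, ← star_eq_conjTranspose, hS.star_eq]
  rw [star_mul, star_mul, hS.star_eq, hSinv, star_eq_conjTranspose, conjTranspose_single, star_one,
    ← mul_single_one_mul_mul_single_one_mul]
  simp only [mul_assoc]

lemma inv_mul_single_mul_inv_mul_inv_mul_single_mul_inv [CommRing R] (S : Matrix n n R)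
    (i k j : n) :
    S⁻¹ * single i k 1 * S⁻¹ * (S⁻¹ * single k j 1 * S⁻¹) =
      (S * S)⁻¹ k k • (S⁻¹ * single i j 1 * S⁻¹) := by
  rw [← mul_single_one_mul_mul_single_one_mul, Matrix.mul_inv_rev]
  simp only [mul_assoc]

lemma IsHermitian.eigenvectorUnitary_mul_diagonal_mul_star_eq_cfc {A : Matrix n n ℂ}
    (hA : A.IsHermitian) (f : ℝ → ℝ) :
    (hA.eigenvectorUnitary : Matrix n n ℂ) * diagonal ((↑) ∘ f ∘ hA.eigenvalues) *
      (star hA.eigenvectorUnitary : Matrix n n ℂ) = cfc f A := by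
  rw [hA.cfc_eq, IsHermitian.cfc, Unitary.conjStarAlgAut_apply]
  rfl

lemma PosSemidef.cfc_sqrt_mul_self {𝕜 : Type*} [RCLike 𝕜] {A : Matrix n n 𝕜}
    (hA : A.PosSemidef) : cfc Real.sqrt A * cfc Real.sqrt A = A := by
  rw [← cfc_mul Real.sqrt Real.sqrt A]
  refine (cfc_congr fun x hx ↦ ?_).trans (cfc_id' ℝ A hA.isHermitian.isSelfAdjoint)
  obtain ⟨i, rfl⟩ := hA.isHermitian.spectrum_real_eq_range_eigenvalues ▸ hx
  exact Real.mul_self_sqrt (hA.eigenvalues_nonneg i)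

lemma PosDef.isUnit_cfc_sqrt {𝕜 : Type*} [RCLike 𝕜] {A : Matrix n n 𝕜} (hA : A.PosDef) :
    IsUnit (cfc Real.sqrt A) := by
  have hdet := (isUnit_iff_isUnit_det A).mp hA.isUnit
  rw [← hA.posSemidef.cfc_sqrt_mul_self, det_mul] at hdet
  exact (isUnit_iff_isUnit_det _).mpr (isUnit_of_mul_isUnit_left hdet)

theorem subalgebra_eq_top_of_inv_mul_single_mul_inv_mem [Field R]
    {T : Subalgebra R (Matrix n n R)} {S : Matrix n n R} (hS : IsUnit S) (z : n)
    (hz : (S * S)⁻¹ z z ≠ 0) (hrow : ∀ j, S⁻¹ * single z j 1 * S⁻¹ ∈ T)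
    (hcol : ∀ i, S⁻¹ * single i z 1 * S⁻¹ ∈ T) : T = ⊤ := by
  have hSinv : IsUnit S⁻¹ := isUnit_nonsing_inv_iff.mpr hS
  rw [← Algebra.toSubmodule_eq_top, eq_top_iff,
    ← span_mul_single_one_mul_eq_top hSinv hSinv, Submodule.span_le]
  rintro _ ⟨⟨i, j⟩, rfl⟩
  refine SMulMemClass.mem_of_smul_mem hz ?_
  rw [← inv_mul_single_mul_inv_mul_inv_mul_single_mul_inv]
  exact T.mul_mem (hcol i) (hrow j)

end Matrix

/-- if `G` is positive definite with all entries of its first row nonzero, and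
`A_i = G^{-1/2} E_{ii} G^{1/2}`, then the unital star-subalgebra of `M_n(ℂ)` generated by the
`A_i` is all of `M_n(ℂ)`. -/
theorem stmt13 (n : ℕ) (hn : 1 ≤ n) (G : Matrix (Fin n) (Fin n) ℂ) (hG : G.PosDef)
    (hrow : ∀ j : Fin n, G ⟨0, hn⟩ j ≠ 0)
    (A : Fin n → Matrix (Fin n) (Fin n) ℂ)
    (hA : ∀ i, A i = ((hG.posSemidef.1.eigenvectorUnitary : Matrix (Fin n) (Fin n) ℂ) *
        diagonal (((↑) ∘ Real.sqrt ∘ hG.posSemidef.1.eigenvalues : Fin n → ℂ)) *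
        (star hG.posSemidef.1.eigenvectorUnitary : Matrix (Fin n) (Fin n) ℂ))⁻¹ *
      Matrix.single i i (1 : ℂ) * ((hG.posSemidef.1.eigenvectorUnitary : Matrix (Fin n) (Fin n) ℂ) *
        diagonal (((↑) ∘ Real.sqrt ∘ hG.posSemidef.1.eigenvalues : Fin n → ℂ)) *
        (star hG.posSemidef.1.eigenvectorUnitary : Matrix (Fin n) (Fin n) ℂ))) :
    StarAlgebra.adjoin ℂ (Set.range A) = ⊤ := by
  simp only [hG.posSemidef.1.eigenvectorUnitary_mul_diagonal_mul_star_eq_cfc] at hA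
  set S := cfc Real.sqrt G
  set z : Fin n := ⟨0, hn⟩
  have hSS : S * S = G := hG.posSemidef.cfc_sqrt_mul_self
  have hS : IsSelfAdjoint S := cfc_predicate _ _
  have hprod (i j : Fin n) : A i * star (A j) ∈ StarAlgebra.adjoin ℂ (Set.range A) :=
    mul_mem (StarAlgebra.subset_adjoin ℂ _ ⟨i, rfl⟩)
      (star_mem (StarAlgebra.subset_adjoin ℂ _ ⟨j, rfl⟩))
  have hcol (i : Fin n) : G i z ≠ 0 := by
    rw [← hG.isHermitian.apply i z]
    exact star_ne_zero.mpr (hrow i)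
  rw [← StarSubalgebra.toSubalgebra_eq_top]
  refine subalgebra_eq_top_of_inv_mul_single_mul_inv_mem (S := S) hG.isUnit_cfc_sqrt z ?_
    (fun j ↦ SMulMemClass.mem_of_smul_mem (hrow j) ?_)
    (fun i ↦ SMulMemClass.mem_of_smul_mem (hcol i) ?_)
  · rw [hSS]
    exact hG.inv.diag_pos.ne'
  · rw [← hSS, ← inv_mul_single_mul_mul_star hS, ← hA, ← hA]
    exact hprod z j
  · rw [← hSS, ← inv_mul_single_mul_mul_star hS, ← hA, ← hA]
    exact hprod i z
end

section
/- Let λ = 1/√2, z₁ = 4/(3√2), z₂ = 1/(2√2), z₃ = √2/3, z₄ = −1/√2, and ω = √2 − 1. Then the Blaschke products B_{z₁,z₂,ω} and B_{z₃,z₄,ω} both satisfy the node constraint: B_{z₁,z₂,ω}(0) = B_{z₁,z₂,ω}(λ) and B_{z₃,z₄,ω}(0) = B_{z₃,z₄,ω}(λ). -/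
/-!
Writing `φ_a(z) = (z - a)/(1 - a z)`, we have `B_{a,b,c}(0) = -abc` and
`B_{a,b,c}(λ) = φ_a(λ) φ_b(λ) φ_c(λ)`. For `ω = √2 - 1` the point `λ = 1/√2` satisfies
`φ_ω(λ) = ω = -φ_ω(0)`, so the `ω`-factor flips the sign between `0` and `λ`, and the node constraint
reduces to `φ_a(λ) φ_b(λ) = -ab` for the two remaining zeroes. This holds for both pairs because
`φ_{z₁}(λ) = -λ`, `φ_{z₂}(λ) = z₃`, `φ_{z₃}(λ) = z₂` and `φ_{z₄}(λ) = z₁`.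
-/

open Real

/-- The real degree-three Blaschke product with zeroes `a, b, c`. -/
noncomputable def B3R (a b c z : ℝ) : ℝ :=
  ((z - a) / (1 - a * z)) * ((z - b) / (1 - b * z)) * ((z - c) / (1 - c * z))

noncomputable def blaschkeFactor (a z : ℝ) : ℝ := (z - a) / (1 - a * z)

theorem B3R_eq_mul (a b c z : ℝ) :
    B3R a b c z = blaschkeFactor a z * blaschkeFactor b z * blaschkeFactor c z :=
  rfl

@[simp]
theorem blaschkeFactor_zero (a : ℝ) : blaschkeFactor a 0 = -a := by
  simp [blaschkeFactor]

theorem B3R_zero_eq_of_blaschkeFactor {a b c z : ℝ}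
    (hab : blaschkeFactor a z * blaschkeFactor b z = -(a * b)) (hc : blaschkeFactor c z = c) :
    B3R a b c 0 = B3R a b c z := by
  rw [B3R_eq_mul, B3R_eq_mul, hab, hc]
  simp only [blaschkeFactor_zero]
  ring

theorem blaschkeFactor_sqrt_two_sub_one : blaschkeFactor (√2 - 1) (1 / √2) = √2 - 1 := by
  unfold blaschkeFactor
  rw [div_eq_iff (by field_simp; simp)]
  field_simp
  linarith [Real.sq_sqrt zero_le_two]

theorem blaschkeFactor_z₁ : blaschkeFactor (4 / (3 * √2)) (1 / √2) = -(1 / √2) := by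
  unfold blaschkeFactor
  rw [div_eq_iff (by field_simp; norm_num [Real.sq_sqrt zero_le_two])]
  field_simp
  linarith [Real.sq_sqrt zero_le_two]

theorem blaschkeFactor_z₂ : blaschkeFactor (1 / (2 * √2)) (1 / √2) = √2 / 3 := by
  unfold blaschkeFactor
  rw [div_eq_iff (by field_simp; norm_num [Real.sq_sqrt zero_le_two])]
  field_simp
  linarith [Real.sq_sqrt zero_le_two]

theorem blaschkeFactor_z₃ : blaschkeFactor (√2 / 3) (1 / √2) = 1 / (2 * √2) := by
  unfold blaschkeFactor
  rw [div_eq_iff (by field_simp; norm_num [Real.sq_sqrt zero_le_two])]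
  field_simp
  linarith [Real.sq_sqrt zero_le_two]

theorem blaschkeFactor_z₄ : blaschkeFactor (-(1 / √2)) (1 / √2) = 4 / (3 * √2) := by
  unfold blaschkeFactor
  rw [div_eq_iff (by field_simp; norm_num [Real.sq_sqrt zero_le_two])]
  field_simp
  linarith [Real.sq_sqrt zero_le_two]

/-- with `λ = 1/√2`, `z₁ = 4/(3√2)`, `z₂ = 1/(2√2)`, `z₃ = √2/3`, `z₄ = −1/√2`
and `ω = √2 − 1`, both `B_{z₁,z₂,ω}` and `B_{z₃,z₄,ω}` satisfy the node constraint
`f(0) = f(λ)`. -/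
theorem stmt15 :
    B3R (4 / (3 * Real.sqrt 2)) (1 / (2 * Real.sqrt 2)) (Real.sqrt 2 - 1) 0 =
      B3R (4 / (3 * Real.sqrt 2)) (1 / (2 * Real.sqrt 2)) (Real.sqrt 2 - 1)
        (1 / Real.sqrt 2) ∧
    B3R (Real.sqrt 2 / 3) (-(1 / Real.sqrt 2)) (Real.sqrt 2 - 1) 0 =
      B3R (Real.sqrt 2 / 3) (-(1 / Real.sqrt 2)) (Real.sqrt 2 - 1)
        (1 / Real.sqrt 2) := by
  have hs : √2 ^ 2 = 2 := Real.sq_sqrt zero_le_two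
  refine ⟨B3R_zero_eq_of_blaschkeFactor ?_ blaschkeFactor_sqrt_two_sub_one,
    B3R_zero_eq_of_blaschkeFactor ?_ blaschkeFactor_sqrt_two_sub_one⟩
  · rw [blaschkeFactor_z₁, blaschkeFactor_z₂]
    field_simp
    linarith
  · rw [blaschkeFactor_z₃, blaschkeFactor_z₄]
    field_simp
    linarith
end

section
/- There are no real numbers x ≠ y satisfying simultaneously the two equalities: (3x²+14x+5)²·(8y²+4y+5)·(9y²+42y+65) = (3y²+14y+5)²·(8x²+4x+5)·(9x²+42x+65) and (6x²+25x+31)²·(9y²+42y+65)·(8y²+28y+29) = (6y²+25y+31)²·(9x²+42x+65)·(8x²+28x+29). (Equivalently, since 8t²+4t+5, 9t²+42t+65 and 8t²+28t+29 are strictly positive for all real t, for x ≠ y the two normalized kernel-modulus ratios (3x²+14x+5)²/((8x²+4x+5)(9x²+42x+65)) and (6x²+25x+31)²/((9x²+42x+65)(8x²+28x+29)) cannot both take the same values at x and at y.) -/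
/-!
Since `x ≠ y`, the factor `x - y` can be cancelled from both equations, leaving two symmetric
polynomial equations `divDiff₁ x y = 0`, `divDiff₂ x y = 0` of degree three in each variable.
Eliminating `y` between them, an explicit combination of the two with polynomial coefficients
is a polynomial in `x` alone, a product of `(x² + 1)²`, `x² + 4x + 5`, `9x² + 42x + 65` and two
quartics, each of which is positive on `ℝ`. So the two equations have no common real solution.
-/

namespace KernelRatioCoincidence

section CommRing

variable {R : Type*} [CommRing R]

def divDiff₁ (x y : R) : R :=
  150 + 245 * x + 80 * x ^ 2 + 5 * x ^ 3 + 245 * y + 96 * x * y - 51 * x ^ 2 * y - 26 * x ^ 3 * y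
    + 80 * y ^ 2 - 51 * x * y ^ 2 - 126 * x ^ 2 * y ^ 2 - 43 * x ^ 3 * y ^ 2
    + 5 * y ^ 3 - 26 * x * y ^ 3 - 43 * x ^ 2 * y ^ 3 - 12 * x ^ 3 * y ^ 3

def divDiff₂ (x y : R) : R :=
  186 - 111 * x + 36 * x ^ 2 - 111 * x ^ 3 - 111 * y - 336 * x * y - 111 * x ^ 2 * y
    - 186 * x ^ 3 * y + 36 * y ^ 2 - 111 * x * y ^ 2 - 114 * x ^ 2 * y ^ 2 - 111 * x ^ 3 * y ^ 2
    - 111 * y ^ 3 - 186 * x * y ^ 3 - 111 * x ^ 2 * y ^ 3 - 36 * x ^ 3 * y ^ 3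

def eliminant (x : R) : R :=
  (x ^ 2 + 1) ^ 2 * (x ^ 2 + 4 * x + 5) * (9 * x ^ 2 + 42 * x + 65)
    * (3 * x ^ 4 + 12 * x ^ 3 + 43 * x ^ 2 + 62 * x + 40)
    * (96 * x ^ 4 + 398 * x ^ 3 + 606 * x ^ 2 + 423 * x + 335)

/- The Bézout cofactors of the resultant in `y` of `divDiff₁` and `divDiff₂`, which is
`(x + 1) * eliminant x` up to a constant, with the common factor `x + 1` cancelled. -/
def bezout₁ (x y : R) : R :=
  (223601550 + 1835519505 * x + 4787431377 * x ^ 2 + 8597008542 * x ^ 3 + 12476373666 * x ^ 4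
    + 14990781774 * x ^ 5 + 14710598502 * x ^ 6 + 11746933032 * x ^ 7 + 7540350630 * x ^ 8
    + 3804735897 * x ^ 9 + 1487961633 * x ^ 10 + 445494114 * x ^ 11 + 99614466 * x ^ 12
    + 15148512 * x ^ 13 + 1198800 * x ^ 14) +
  (-236246775 - 968299140 * x - 2109845001 * x ^ 2 - 3035593500 * x ^ 3 - 3097750476 * x ^ 4
    - 2126304672 * x ^ 5 - 617576394 * x ^ 6 + 588775512 * x ^ 7 + 1013405289 * x ^ 8
    + 822946668 * x ^ 9 + 458342211 * x ^ 10 + 184520772 * x ^ 11 + 52322778 * x ^ 12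
    + 9359928 * x ^ 13 + 810000 * x ^ 14) * y +
  (273945225 + 1182461985 * x + 2502843534 * x ^ 2 + 3799634742 * x ^ 3 + 5011363998 * x ^ 4
    + 5952658878 * x ^ 5 + 6009912360 * x ^ 6 + 4907848248 * x ^ 7 + 3175956657 * x ^ 8
    + 1613243721 * x ^ 9 + 636134706 * x ^ 10 + 189796410 * x ^ 11 + 40763520 * x ^ 12
    + 5664816 * x ^ 13 + 388800 * x ^ 14) * y ^ 2

def bezout₂ (x y : R) : R :=
  (493998750 + 1391851375 * x + 2293035475 * x ^ 2 + 3417539810 * x ^ 3 + 4602500110 * x ^ 4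
    + 4704296210 * x ^ 5 + 3444253090 * x ^ 6 + 1868334200 * x ^ 7 + 822869350 * x ^ 8
    + 325031495 * x ^ 9 + 116154995 * x ^ 10 + 33746430 * x ^ 11 + 6979350 * x ^ 12
    + 891360 * x ^ 13 + 54000 * x ^ 14) +
  (190798375 + 395779600 * x + 263271805 * x ^ 2 + 90326228 * x ^ 3 + 48023428 * x ^ 4
    - 378983992 * x ^ 5 - 1242417278 * x ^ 6 - 1767503800 * x ^ 7 - 1550736185 * x ^ 8
    - 946432224 * x ^ 9 - 423035599 * x ^ 10 - 139168956 * x ^ 11 - 32321490 * x ^ 12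
    - 4749912 * x ^ 13 - 334800 * x ^ 14) * y +
  (12339875 - 31580925 * x - 229775790 * x ^ 2 - 490174974 * x ^ 3 - 700278630 * x ^ 4
    - 910066758 * x ^ 5 - 1091479224 * x ^ 6 - 1068257688 * x ^ 7 - 801530469 * x ^ 8
    - 456851845 * x ^ 9 - 196597986 * x ^ 10 - 62509938 * x ^ 11 - 13943376 * x ^ 12
    - 1953072 * x ^ 13 - 129600 * x ^ 14) * y ^ 2

theorem mul_eliminant_eq (x y : R) :
    28800 * eliminant x = bezout₁ x y * divDiff₁ x y + bezout₂ x y * divDiff₂ x y := by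
  simp only [eliminant, bezout₁, bezout₂, divDiff₁, divDiff₂]
  ring

end CommRing

section Ordered

variable {R : Type*} [Field R] [LinearOrder R] [IsStrictOrderedRing R]

theorem eliminant_pos (x : R) : 0 < eliminant x := by
  have h₁ : 0 < x ^ 2 + 4 * x + 5 := by nlinarith [sq_nonneg (x + 2)]
  have h₂ : 0 < 9 * x ^ 2 + 42 * x + 65 := by nlinarith [sq_nonneg (3 * x + 7)]
  have h₃ : 0 < 3 * x ^ 4 + 12 * x ^ 3 + 43 * x ^ 2 + 62 * x + 40 := by
    nlinarith [sq_nonneg (x ^ 2 + 2 * x), sq_nonneg (x + 1)]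
  have h₄ : 0 < 96 * x ^ 4 + 398 * x ^ 3 + 606 * x ^ 2 + 423 * x + 335 := by
    nlinarith [sq_nonneg (96 * x ^ 2 + 199 * x), sq_nonneg (18575 * x + 20304), sq_nonneg x]
  unfold eliminant
  positivity

theorem not_divDiff₁_eq_zero_and_divDiff₂_eq_zero (x y : R) :
    ¬(divDiff₁ x y = 0 ∧ divDiff₂ x y = 0) := by
  rintro ⟨h₁, h₂⟩
  have := mul_eliminant_eq x y
  rw [h₁, h₂] at this
  linarith [eliminant_pos x]

end Ordered

end KernelRatioCoincidence

open KernelRatioCoincidence in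
/-- no two distinct real numbers `x ≠ y` satisfy simultaneously the two
kernel-modulus coincidence equations from the unitary-inequivalence analysis. -/
theorem stmt19 (x y : ℝ) (hxy : x ≠ y) :
    ¬((3 * x ^ 2 + 14 * x + 5) ^ 2 * (8 * y ^ 2 + 4 * y + 5) * (9 * y ^ 2 + 42 * y + 65) =
        (3 * y ^ 2 + 14 * y + 5) ^ 2 * (8 * x ^ 2 + 4 * x + 5) * (9 * x ^ 2 + 42 * x + 65) ∧
      (6 * x ^ 2 + 25 * x + 31) ^ 2 * (9 * y ^ 2 + 42 * y + 65) * (8 * y ^ 2 + 28 * y + 29) =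
        (6 * y ^ 2 + 25 * y + 31) ^ 2 * (9 * x ^ 2 + 42 * x + 65) *
          (8 * x ^ 2 + 28 * x + 29)) := by
  rintro ⟨h₁, h₂⟩
  have hxy' : x - y ≠ 0 := sub_ne_zero.mpr hxy
  refine not_divDiff₁_eq_zero_and_divDiff₂_eq_zero x y ⟨?_, ?_⟩
  · refine (mul_eq_zero.mp ?_).resolve_left hxy'
    unfold divDiff₁
    linear_combination (1 / 225 : ℝ) * h₁
  · refine (mul_eq_zero.mp ?_).resolve_left hxy'
    unfold divDiff₂
    linear_combination (1 / 12 : ℝ) * h₂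
end
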